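/- Suppose every g-module contained in C is finite dimensional and C^du is the category of full duals (V^du = V* for every object V). Then: (a) the multiplication map of M admits a comorphism, and F[M] becomes a bialgebra with comultiplication the comorphism of the multiplication map and counit the evaluation at the unit of M; (b) the map sending each m ∈ M to its evaluation homomorphism is a bijection from M onto Specm F[M], the set of F-algebra homomorphisms F[M] → F; (c) the map sending each x ∈ Lie(M) to the derivation δ_x is a linear bijection from Lie(M) onto Der_1(F[M]), the space of point derivations of F[M] at 1 ∈ M. -/

import Mathlib

open TensorProduct

universe u v w

attribute [local instance 100] LieRing.ofAssociativeRing

/-- The data of a (full sub)category `C` of `g`-modules together with a category of duals: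
an index type `ι`, for each index a `g`-module `V i`, and a chosen point-separating
subspace `du i` of the full linear dual of `V i`. -/
structure TannakaSetting (F : Type u) [Field F] (g : Type v) [LieRing g] [LieAlgebra F g] where
  ι : Type w
  V : ι → Type w
  [iAdd : ∀ i, AddCommGroup (V i)]
  [iMod : ∀ i, Module F (V i)]
  ρ : ∀ i, g →ₗ⁅F⁆ Module.End F (V i)
  du : ∀ i, Submodule F (Module.Dual F (V i))

attribute [instance] TannakaSetting.iAdd TannakaSetting.iMod

namespace TannakaSetting

variable {F : Type u} [Field F] {g : Type v} [LieRing g] [LieAlgebra F g]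
variable (D : TannakaSetting F g)

/-- `g`-equivariant linear maps between objects of the category. -/
def IsHom {i j : D.ι} (f : D.V i →ₗ[F] D.V j) : Prop :=
  ∀ x : g, f ∘ₗ (D.ρ i x : Module.End F (D.V i)) = (D.ρ j x : Module.End F (D.V j)) ∘ₗ f

/-- An endomorphism of `V i` lies in `End_{V^du}(V)`, i.e. its transpose preserves
the chosen dual subspace. -/
def PreservesDu (i : D.ι) (f : Module.End F (D.V i)) : Prop :=
  ∀ φ ∈ D.du i, f.dualMap φ ∈ D.du i

/-- The action of `x ∈ g` on a tensor product of two objects. -/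
noncomputable def tensorρ (i j : D.ι) (x : g) : Module.End F (D.V i ⊗[F] D.V j) :=
  TensorProduct.map (D.ρ i x) LinearMap.id + TensorProduct.map LinearMap.id (D.ρ j x)

/-- `e` realizes `V k` as a tensor product of the `g`-modules `V i` and `V j`. -/
def IsTensorProd (i j k : D.ι) (e : D.V k ≃ₗ[F] (D.V i ⊗[F] D.V j)) : Prop :=
  ∀ x : g, e.toLinearMap ∘ₗ (D.ρ k x : Module.End F (D.V k)) = D.tensorρ i j x ∘ₗ e.toLinearMap

/-- `e` realizes `V k` as a direct sum of the `g`-modules `V i` and `V j`. -/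
def IsSumProd (i j k : D.ι) (e : D.V k ≃ₗ[F] (D.V i × D.V j)) : Prop :=
  ∀ x : g, e.toLinearMap ∘ₗ (D.ρ k x : Module.End F (D.V k)) =
    ((D.ρ i x : Module.End F (D.V i)).prodMap (D.ρ j x : Module.End F (D.V j))) ∘ₗ e.toLinearMap

/-- `V i` is a one-dimensional trivial `g`-module. -/
def IsTrivOneDim (i : D.ι) : Prop :=
  Module.finrank F (D.V i) = 1 ∧ ∀ x : g, (D.ρ i x : Module.End F (D.V i)) = 0

/-- The functional `φ ⊗ ψ` on a tensor product. -/
noncomputable def tensorDual {i j : D.ι} (φ : Module.Dual F (D.V i))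
    (ψ : Module.Dual F (D.V j)) : Module.Dual F (D.V i ⊗[F] D.V j) :=
  TensorProduct.dualDistrib F (D.V i) (D.V j) (φ ⊗ₜ[F] ψ)

/-- The axioms on the pair of categories `C`, `C^du`:
`C` is closed under isomorphism, (binary) direct sums, tensor products, submodules,
contains a one-dimensional trivial module, `g` acts faithfully, and the duals separate points,
are stable under the transposed `g`-action and under transposes of morphisms, and are compatible
with direct sums and tensor products. -/
structure IsGoodSetting : Prop where
  separating : ∀ (i : D.ι) (v : D.V i), v ≠ 0 → ∃ φ ∈ D.du i, φ v ≠ 0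
  du_g : ∀ (i : D.ι) (x : g), D.PreservesDu i (D.ρ i x)
  du_hom : ∀ (i j : D.ι) (f : D.V i →ₗ[F] D.V j), D.IsHom f →
    ∀ ψ ∈ D.du j, f.dualMap ψ ∈ D.du i
  faithful : ∀ x : g, (∀ i, (D.ρ i x : Module.End F (D.V i)) = 0) → x = 0
  exists_triv : ∃ i, D.IsTrivOneDim i
  exists_sum : ∀ i j : D.ι, ∃ (k : D.ι) (e : D.V k ≃ₗ[F] (D.V i × D.V j)), D.IsSumProd i j k e
  exists_tensor : ∀ i j : D.ι,
    ∃ (k : D.ι) (e : D.V k ≃ₗ[F] (D.V i ⊗[F] D.V j)), D.IsTensorProd i j k e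
  du_tensor : ∀ (i j k : D.ι) (e : D.V k ≃ₗ[F] (D.V i ⊗[F] D.V j)), D.IsTensorProd i j k e →
    ∀ φ ∈ D.du i, ∀ ψ ∈ D.du j, e.toLinearMap.dualMap (D.tensorDual φ ψ) ∈ D.du k
  du_sum : ∀ (i j k : D.ι) (e : D.V k ≃ₗ[F] (D.V i × D.V j)), D.IsSumProd i j k e →
    ∀ ξ : Module.Dual F (D.V k), ξ ∈ D.du k ↔
      ∃ φ ∈ D.du i, ∃ ψ ∈ D.du j,
        ξ = e.toLinearMap.dualMap
          ((LinearMap.fst F (D.V i) (D.V j)).dualMap φ +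
            (LinearMap.snd F (D.V i) (D.V j)).dualMap ψ)
  submod_closed : ∀ (i : D.ι) (U : Submodule F (D.V i)), (∀ x : g, ∀ u ∈ U, D.ρ i x u ∈ U) →
    ∃ (k : D.ι) (e : D.V k ≃ₗ[F] ↥U), ∀ (x : g) (v : D.V k),
      (↑(e ((D.ρ k x) v)) : D.V i) = D.ρ i x ↑(e v)
  isoClosed : ∀ (W : Type w) [AddCommGroup W] [Module F W] (ρW : g →ₗ⁅F⁆ Module.End F W)
    (i : D.ι) (e : D.V i ≃ₗ[F] W), (∀ (x : g) (v : D.V i), e (D.ρ i x v) = ρW x (e v)) →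
    ∃ (k : D.ι) (e' : D.V k ≃ₗ[F] W), ∀ (x : g) (v : D.V k), e' (D.ρ k x v) = ρW x (e' v)

/-- The algebra `Nat` of natural transformations: families of endomorphisms
`m i ∈ End_{V^du}(V i)` commuting with all `g`-equivariant maps between objects. -/
def NatAlg : Set (∀ i, Module.End F (D.V i)) :=
  { m | (∀ i, D.PreservesDu i (m i)) ∧
        ∀ (i j : D.ι) (f : D.V i →ₗ[F] D.V j), D.IsHom f → f ∘ₗ m i = m j ∘ₗ f }

/-- The Tannaka monoid `M`: natural transformations compatible with tensor products and
acting as the identity on trivial one-dimensional modules. -/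
def M : Set (∀ i, Module.End F (D.V i)) :=
  { m | m ∈ D.NatAlg ∧
        (∀ (i j k : D.ι) (e : D.V k ≃ₗ[F] (D.V i ⊗[F] D.V j)), D.IsTensorProd i j k e →
          e.toLinearMap ∘ₗ m k = TensorProduct.map (m i) (m j) ∘ₗ e.toLinearMap) ∧
        (∀ i, D.IsTrivOneDim i → m i = 1) }

/-- The matrix coefficient `f_{φ v}` as a function on the Tannaka monoid `M`. -/
def matCoef (i : D.ι) (φ : Module.Dual F (D.V i)) (v : D.V i) : ↥D.M → F :=
  fun m => φ (m.1 i v)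

/-- The coordinate ring `F[M]` of matrix coefficients (a set of functions on `M`). -/
def coordRing : Set (↥D.M → F) :=
  { f | ∃ (i : D.ι) (φ : Module.Dual F (D.V i)) (v : D.V i), φ ∈ D.du i ∧ f = D.matCoef i φ v }

/-- The Lie algebra `Lie(M)` of the Tannaka monoid. -/
def LieM : Set (∀ i, Module.End F (D.V i)) :=
  { x | x ∈ D.NatAlg ∧
        (∀ (i j k : D.ι) (e : D.V k ≃ₗ[F] (D.V i ⊗[F] D.V j)), D.IsTensorProd i j k e →
          e.toLinearMap ∘ₗ x k =
            (TensorProduct.map (x i) LinearMap.id +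
              TensorProduct.map LinearMap.id (x j)) ∘ₗ e.toLinearMap) ∧
        (∀ i, D.IsTrivOneDim i → x i = 0) ∧
        (∃ δ : (↥D.M → F) → F, ∀ (i : D.ι) (φ : Module.Dual F (D.V i)) (v : D.V i),
          φ ∈ D.du i → δ (D.matCoef i φ v) = φ (x i v)) }

/-- The Lie algebra `Lie(N)` of a submonoid `N ⊆ M`: those `x ∈ Lie(M)` whose derivation
`δ_x` annihilates the vanishing ideal `I(N) ⊆ F[M]`. -/
def LieOf (N : Set (↥D.M)) : Set (∀ i, Module.End F (D.V i)) :=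
  { x | x ∈ D.LieM ∧ ∀ (i : D.ι) (φ : Module.Dual F (D.V i)) (v : D.V i), φ ∈ D.du i →
      (∀ n ∈ N, D.matCoef i φ v n = 0) → φ (x i v) = 0 }

/-- The unit group `M^×` of the Tannaka monoid, as a subset of `M`. -/
def unitsSet : Set (↥D.M) :=
  { m | ∃ n : ↥D.M, m.1 * n.1 = 1 ∧ n.1 * m.1 = 1 }

/-- The pair `C`, `C^du` is good for integrating `g`: `g ⊆ Lie(M)`. -/
def Good : Prop := ∀ x : g, (fun i => (D.ρ i x : Module.End F (D.V i))) ∈ D.LieM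

/-- The pair `C`, `C^du` is very good for integrating `g`: `g ⊆ Lie(M^×)`. -/
def VeryGood : Prop :=
  ∀ x : g, (fun i => (D.ρ i x : Module.End F (D.V i))) ∈ D.LieOf D.unitsSet

/-- A subset `S ⊆ M` is Zariski dense in `M`. -/
def DenseIn (S : Set (↥D.M)) : Prop :=
  ∀ f ∈ D.coordRing, (∀ m ∈ S, f m = 0) → ∀ m, f m = 0

theorem one_mem_M : (1 : ∀ i, Module.End F (D.V i)) ∈ D.M := by
  refine ⟨⟨?_, ?_⟩, ?_, ?_⟩
  · intro i φ hφ
    change LinearMap.dualMap LinearMap.id φ ∈ _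
    rw [LinearMap.dualMap_id]
    exact hφ
  · intro i j f _
    ext v
    simp
  · intro i j k e _
    ext v
    simp [TensorProduct.map_one]
  · intro i _
    rfl

/-- The unit of the Tannaka monoid as an element of the subtype `↥M`. -/
def oneM : ↥D.M := ⟨1, D.one_mem_M⟩

end TannakaSetting

open TensorProduct

variable {F : Type u} [Field F] [CharZero F] {g : Type v} [LieRing g] [LieAlgebra F g]

/-!
Because every `V` is finite dimensional, hence reflexive, a linear functional `L` on `F[M]`
determines endomorphisms `m_V` by `φ (m_V v) = L (f_{φ v})`, and these commute with all
morphisms because matrix coefficients do. Since `f_{φ u} * f_{ψ w}` is the matrix coefficient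
of `φ ⊗ ψ` at `u ⊗ w`, the family `m` is compatible with tensor products when `L` is
multiplicative, and satisfies the Leibniz rule of `Lie(M)` when `L` is a derivation at `1`. Injectivity in (b) and (c) is point separation by the duals, and the comorphism in (a)
comes from expanding `m' v` in a basis: `φ (m m' v) = ∑ₖ φ (m bₖ) bₖ*(m' v)`.
-/

theorem TensorProduct.ext_dualDistrib {R V W : Type*} [Field R] [AddCommGroup V] [Module R V]
    [AddCommGroup W] [Module R W] [FiniteDimensional R V] [FiniteDimensional R W]
    {a b : V ⊗[R] W}
    (h : ∀ (φ : Module.Dual R V) (ψ : Module.Dual R W),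
      dualDistrib R V W (φ ⊗ₜ ψ) a = dualDistrib R V W (φ ⊗ₜ ψ) b) :
    a = b := by
  refine Module.eval_apply_injective R (LinearMap.ext fun ξ => ?_)
  obtain ⟨s, rfl⟩ := (dualDistribEquiv R V W).surjective ξ
  induction s using TensorProduct.induction_on with
  | zero => simp
  | tmul φ ψ => exact h φ ψ
  | add s t hs ht => simp_all [map_add]

namespace TannakaSetting

variable {F : Type*} [Field F] {g : Type*} [LieRing g] [LieAlgebra F g] {D : TannakaSetting F g}

theorem IsGoodSetting.eq_of_forall_du_apply_eq (HG : D.IsGoodSetting) {i : D.ι} {a b : D.V i}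
    (h : ∀ φ ∈ D.du i, φ a = φ b) : a = b := by
  by_contra hab
  obtain ⟨φ, hφ, hne⟩ := HG.separating i (a - b) (sub_ne_zero.mpr hab)
  exact hne (by rw [map_sub, h φ hφ, sub_self])

theorem IsGoodSetting.ext_of_du_apply (HG : D.IsGoodSetting) {x y : ∀ i, Module.End F (D.V i)}
    (h : ∀ i, ∀ φ ∈ D.du i, ∀ v, φ (x i v) = φ (y i v)) : x = y :=
  funext fun i => LinearMap.ext fun v => HG.eq_of_forall_du_apply_eq fun φ hφ => h i φ hφ v

theorem IsGoodSetting.du_eq_top (HG : D.IsGoodSetting) (i : D.ι) [FiniteDimensional F (D.V i)] :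
    D.du i = ⊤ := by
  have hco : (D.du i).dualCoannihilator = ⊥ := (Submodule.eq_bot_iff _).mpr fun v hv =>
    HG.eq_of_forall_du_apply_eq fun φ hφ => by
      rw [map_zero]; exact (Submodule.mem_dualCoannihilator v).mp hv φ hφ
  rw [← Subspace.dualCoannihilator_dualAnnihilator_eq (W := D.du i), hco,
    Submodule.dualAnnihilator_bot]

theorem matCoef_mul_eq_sum {κ : Type*} [Fintype κ] {i : D.ι} (b : Module.Basis κ F (D.V i))
    (φ : Module.Dual F (D.V i)) (v : D.V i) (m m' : ↥D.M) (hmm : m.1 * m'.1 ∈ D.M) :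
    D.matCoef i φ v ⟨m.1 * m'.1, hmm⟩ =
      ∑ k, D.matCoef i φ (b k) m * D.matCoef i (b.coord k) v m' := by
  change φ (m.1 i (m'.1 i v)) = _
  conv_lhs => rw [← b.sum_repr (m'.1 i v)]
  simp only [map_sum, map_smul, smul_eq_mul, matCoef, Module.Basis.coord_apply]
  exact Finset.sum_congr rfl fun k _ => mul_comm _ _

@[simp]
theorem matCoef_oneM (i : D.ι) (φ : Module.Dual F (D.V i)) (v : D.V i) :
    D.matCoef i φ v D.oneM = φ v :=
  rfl

theorem matCoef_of_isTrivOneDim {i : D.ι} (hi : D.IsTrivOneDim i) (φ : Module.Dual F (D.V i))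
    (v : D.V i) : D.matCoef i φ v = φ v • 1 := by
  funext n
  simp [matCoef, n.2.2.2 i hi]

theorem mul_matCoef {i j k : D.ι} {e : D.V k ≃ₗ[F] (D.V i ⊗[F] D.V j)}
    (he : D.IsTensorProd i j k e)
    (φ : Module.Dual F (D.V i)) (ψ : Module.Dual F (D.V j)) (u : D.V i) (w : D.V j) :
    D.matCoef i φ u * D.matCoef j ψ w =
      D.matCoef k (e.toLinearMap.dualMap (D.tensorDual φ ψ)) (e.symm (u ⊗ₜ w)) := by
  funext n
  have hn := LinearMap.congr_fun (n.2.2.1 i j k e he) (e.symm (u ⊗ₜ w))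
  simp only [LinearMap.comp_apply, LinearEquiv.coe_coe, LinearEquiv.apply_symm_apply] at hn
  simp [matCoef, hn, tensorDual]

theorem IsSumProd.isHom_fst {i j k : D.ι} {e : D.V k ≃ₗ[F] (D.V i × D.V j)}
    (he : D.IsSumProd i j k e) : D.IsHom (LinearMap.fst F _ _ ∘ₗ e.toLinearMap) := fun x => by
  rw [LinearMap.comp_assoc, he x]
  rfl

theorem IsSumProd.isHom_snd {i j k : D.ι} {e : D.V k ≃ₗ[F] (D.V i × D.V j)}
    (he : D.IsSumProd i j k e) : D.IsHom (LinearMap.snd F _ _ ∘ₗ e.toLinearMap) := fun x => by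
  rw [LinearMap.comp_assoc, he x]
  rfl

theorem add_matCoef {i j k : D.ι} {e : D.V k ≃ₗ[F] (D.V i × D.V j)} (he : D.IsSumProd i j k e)
    (φ : Module.Dual F (D.V i)) (ψ : Module.Dual F (D.V j)) (u : D.V i) (w : D.V j) :
    D.matCoef i φ u + D.matCoef j ψ w =
      D.matCoef k (e.toLinearMap.dualMap
        ((LinearMap.fst F _ _).dualMap φ + (LinearMap.snd F _ _).dualMap ψ)) (e.symm (u, w)) := by
  funext n
  have h₁ := LinearMap.congr_fun (n.2.1.2 k i _ he.isHom_fst) (e.symm (u, w))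
  have h₂ := LinearMap.congr_fun (n.2.1.2 k j _ he.isHom_snd) (e.symm (u, w))
  simp only [LinearMap.comp_apply, LinearEquiv.coe_coe, LinearEquiv.apply_symm_apply,
    LinearMap.fst_apply, LinearMap.snd_apply] at h₁ h₂
  simp [matCoef, h₁, h₂]

theorem smul_mem_coordRing (c : F) {f : ↥D.M → F} (hf : f ∈ D.coordRing) :
    c • f ∈ D.coordRing := by
  obtain ⟨i, φ, v, hφ, rfl⟩ := hf
  exact ⟨i, c • φ, v, Submodule.smul_mem _ c hφ, rfl⟩

theorem IsGoodSetting.add_mem_coordRing (HG : D.IsGoodSetting) {f h : ↥D.M → F}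
    (hf : f ∈ D.coordRing) (hh : h ∈ D.coordRing) : f + h ∈ D.coordRing := by
  obtain ⟨i, φ, u, hφ, rfl⟩ := hf
  obtain ⟨j, ψ, w, hψ, rfl⟩ := hh
  obtain ⟨k, e, he⟩ := HG.exists_sum i j
  exact ⟨k, _, _, (HG.du_sum i j k e he _).mpr ⟨φ, hφ, ψ, hψ, rfl⟩,
    add_matCoef he φ ψ u w⟩

theorem IsGoodSetting.mul_mem_coordRing (HG : D.IsGoodSetting) {f h : ↥D.M → F}
    (hf : f ∈ D.coordRing) (hh : h ∈ D.coordRing) : f * h ∈ D.coordRing := by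
  obtain ⟨i, φ, u, hφ, rfl⟩ := hf
  obtain ⟨j, ψ, w, hψ, rfl⟩ := hh
  obtain ⟨k, e, he⟩ := HG.exists_tensor i j
  exact ⟨k, _, _, HG.du_tensor i j k e he φ hφ ψ hψ, mul_matCoef he φ ψ u w⟩

theorem IsGoodSetting.one_mem_coordRing (HG : D.IsGoodSetting) :
    (1 : ↥D.M → F) ∈ D.coordRing := by
  obtain ⟨i, hi⟩ := HG.exists_triv
  have : Nontrivial (D.V i) := Module.nontrivial_of_finrank_pos (R := F) (by rw [hi.1]; norm_num)
  obtain ⟨v, hv⟩ := exists_ne (0 : D.V i)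
  obtain ⟨φ, hφ, hφv⟩ := HG.separating i v hv
  refine ⟨i, (φ v)⁻¹ • φ, v, Submodule.smul_mem _ _ hφ, ?_⟩
  rw [matCoef_of_isTrivOneDim hi, LinearMap.smul_apply, smul_eq_mul, inv_mul_cancel₀ hφv,
    one_smul]

theorem IsGoodSetting.matCoef_mem_coordRing (HG : D.IsGoodSetting) (i : D.ι)
    [FiniteDimensional F (D.V i)] (φ : Module.Dual F (D.V i)) (v : D.V i) :
    D.matCoef i φ v ∈ D.coordRing :=
  ⟨i, φ, v, HG.du_eq_top i ▸ Submodule.mem_top, rfl⟩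

def coordAlgebra (HG : D.IsGoodSetting) : Subalgebra F (↥D.M → F) :=
  Submodule.toSubalgebra
    { carrier := D.coordRing
      add_mem' := HG.add_mem_coordRing
      zero_mem' := by simpa using smul_mem_coordRing (0 : F) HG.one_mem_coordRing
      smul_mem' := smul_mem_coordRing }
    HG.one_mem_coordRing fun _ _ => HG.mul_mem_coordRing

def coordFunctional (HG : D.IsGoodSetting) (T : (↥D.M → F) → F)
    (hadd : ∀ f ∈ D.coordRing, ∀ h ∈ D.coordRing, T (f + h) = T f + T h)
    (hsmul : ∀ f ∈ D.coordRing, ∀ c : F, T (c • f) = c * T f) :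
    D.coordAlgebra HG →ₗ[F] F where
  toFun f := T f
  map_add' f h := hadd f f.2 h h.2
  map_smul' c f := hsmul f f.2 c

section FiniteDimensional

variable {HG : D.IsGoodSetting} [∀ i, FiniteDimensional F (D.V i)]

variable (HG) in
def matCoefElem (i : D.ι) (φ : Module.Dual F (D.V i)) (v : D.V i) : D.coordAlgebra HG :=
  ⟨D.matCoef i φ v, HG.matCoef_mem_coordRing i φ v⟩

@[simp]
theorem coe_matCoefElem (i : D.ι) (φ : Module.Dual F (D.V i)) (v : D.V i) :
    (D.matCoefElem HG i φ v : ↥D.M → F) = D.matCoef i φ v :=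
  rfl

noncomputable def endOfFunctional (L : D.coordAlgebra HG →ₗ[F] F) (i : D.ι) :
    Module.End F (D.V i) :=
  (Module.evalEquiv F (D.V i)).symm.toLinearMap ∘ₗ
    LinearMap.mk₂ F (fun v φ => L (D.matCoefElem HG i φ v))
      (fun _ _ _ => by rw [← map_add]; congr 1; ext; simp [matCoefElem, matCoef])
      (fun _ _ _ => by rw [← map_smul]; congr 1; ext; simp [matCoefElem, matCoef])
      (fun _ _ _ => by rw [← map_add]; rfl)
      (fun _ _ _ => by rw [← map_smul]; rfl)

theorem apply_endOfFunctional (L : D.coordAlgebra HG →ₗ[F] F) (i : D.ι)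
    (φ : Module.Dual F (D.V i)) (v : D.V i) :
    φ (D.endOfFunctional L i v) = L (D.matCoefElem HG i φ v) :=
  Module.apply_evalEquiv_symm_apply F (D.V i) φ _

theorem endOfFunctional_mem_natAlg (L : D.coordAlgebra HG →ₗ[F] F) :
    (fun i => D.endOfFunctional L i) ∈ D.NatAlg := by
  refine ⟨fun i φ _ => HG.du_eq_top i ▸ Submodule.mem_top, fun i j f hf => ?_⟩
  ext v
  refine HG.eq_of_forall_du_apply_eq fun ψ _ => ?_
  rw [LinearMap.comp_apply, LinearMap.comp_apply, ← LinearMap.dualMap_apply,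
    apply_endOfFunctional, apply_endOfFunctional]
  congr 1
  ext n
  exact congrArg ψ (LinearMap.congr_fun (n.2.1.2 i j f hf) v)

theorem endOfFunctional_of_isTrivOneDim (L : D.coordAlgebra HG →ₗ[F] F) {i : D.ι}
    (hi : D.IsTrivOneDim i) : D.endOfFunctional L i = L 1 • 1 := by
  ext v
  refine HG.eq_of_forall_du_apply_eq fun φ _ => ?_
  have h : D.matCoefElem HG i φ v = φ v • 1 := Subtype.ext (matCoef_of_isTrivOneDim hi φ v)
  simp [apply_endOfFunctional, h, mul_comm]

theorem endOfFunctional_tensor (L : D.coordAlgebra HG →ₗ[F] F) {i j k : D.ι}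
    {e : D.V k ≃ₗ[F] (D.V i ⊗[F] D.V j)} (he : D.IsTensorProd i j k e)
    (Φ : Module.End F (D.V i ⊗[F] D.V j))
    (hΦ : ∀ φ ψ u w, L (D.matCoefElem HG i φ u * D.matCoefElem HG j ψ w) =
      D.tensorDual φ ψ (Φ (u ⊗ₜ w))) :
    e.toLinearMap ∘ₗ D.endOfFunctional L k = Φ ∘ₗ e.toLinearMap := by
  ext w
  refine TensorProduct.ext_dualDistrib fun φ ψ => ?_
  have key : e.toLinearMap.dualMap (D.tensorDual φ ψ) ∘ₗ D.endOfFunctional L k ∘ₗ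
      e.symm.toLinearMap = D.tensorDual φ ψ ∘ₗ Φ := by
    refine TensorProduct.ext' fun u w => ?_
    rw [LinearMap.comp_apply, LinearMap.comp_apply, LinearMap.comp_apply,
      apply_endOfFunctional, ← hΦ]
    exact congrArg L (Subtype.ext (mul_matCoef he φ ψ u w).symm)
  simpa [tensorDual] using LinearMap.congr_fun key (e w)

theorem endOfFunctional_mem_M (L : D.coordAlgebra HG →ₐ[F] F) :
    (fun i => D.endOfFunctional L.toLinearMap i) ∈ D.M := by
  refine ⟨endOfFunctional_mem_natAlg _, fun i j k e he => ?_, fun i hi => ?_⟩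
  · refine endOfFunctional_tensor _ he _ fun φ ψ u w => ?_
    simp [apply_endOfFunctional, tensorDual]
  · simp [endOfFunctional_of_isTrivOneDim _ hi]

theorem endOfFunctional_mem_LieM (L : D.coordAlgebra HG →ₗ[F] F)
    (hL : ∀ a b, L (a * b) = L a * (b : ↥D.M → F) D.oneM + (a : ↥D.M → F) D.oneM * L b) :
    (fun i => D.endOfFunctional L i) ∈ D.LieM := by
  classical
  refine ⟨endOfFunctional_mem_natAlg _, fun i j k e he => ?_, fun i hi => ?_, ?_⟩
  · refine endOfFunctional_tensor _ he _ fun φ ψ u w => ?_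
    simp [hL, apply_endOfFunctional, tensorDual]
  · have hL1 : L 1 = 0 := by simpa [oneM] using hL 1 1
    simp [endOfFunctional_of_isTrivOneDim _ hi, hL1]
  · refine ⟨fun f => if hf : f ∈ D.coordRing then L ⟨f, hf⟩ else 0, fun i φ v _ => ?_⟩
    exact (dif_pos (HG.matCoef_mem_coordRing i φ v)).trans (apply_endOfFunctional L i φ v).symm

end FiniteDimensional

end TannakaSetting

theorem stmt_12_general (D : TannakaSetting F g) (HG : D.IsGoodSetting)
    (hfd : ∀ i, FiniteDimensional F (D.V i)) :
    -- (a) the comorphism of the multiplication map exists: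
    (∀ f ∈ D.coordRing, ∃ (N : ℕ) (gs hs : Fin N → (↥D.M → F)),
      (∀ k, gs k ∈ D.coordRing ∧ hs k ∈ D.coordRing) ∧
      ∀ (m m' : ↥D.M) (hmm : m.1 * m'.1 ∈ D.M),
        f ⟨m.1 * m'.1, hmm⟩ = ∑ k, gs k m * hs k m') ∧
    -- (b) `M` identifies with `Specm F[M]`:
    ((∀ α : (↥D.M → F) → F,
        (∀ f ∈ D.coordRing, ∀ h ∈ D.coordRing, α (f + h) = α f + α h) →
        (∀ f ∈ D.coordRing, ∀ c : F, α (c • f) = c * α f) →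
        (∀ f ∈ D.coordRing, ∀ h ∈ D.coordRing, α (f * h) = α f * α h) →
        α 1 = 1 →
        ∃ m : ↥D.M, ∀ f ∈ D.coordRing, α f = f m) ∧
      (∀ m m' : ↥D.M, (∀ f ∈ D.coordRing, f m = f m') → m = m')) ∧
    -- (c) `Lie(M)` identifies with `Der_1(F[M])`:
    ((∀ δ : (↥D.M → F) → F,
        (∀ f ∈ D.coordRing, ∀ h ∈ D.coordRing, δ (f + h) = δ f + δ h) →
        (∀ f ∈ D.coordRing, ∀ c : F, δ (c • f) = c * δ f) →
        (∀ f ∈ D.coordRing, ∀ h ∈ D.coordRing,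
          δ (f * h) = δ f * h D.oneM + f D.oneM * δ h) →
        ∃ x ∈ D.LieM, ∀ (i : D.ι) (φ : Module.Dual F (D.V i)) (v : D.V i), φ ∈ D.du i →
          δ (D.matCoef i φ v) = φ (x i v)) ∧
      (∀ x ∈ D.LieM, ∀ y ∈ D.LieM,
        (∀ (i : D.ι) (φ : Module.Dual F (D.V i)) (v : D.V i), φ ∈ D.du i →
          φ (x i v) = φ (y i v)) → x = y)) := by
  refine ⟨fun f hf => ?_, ⟨fun α hadd hsmul hmul hone => ?_, fun m m' h => ?_⟩,
    fun δ hadd hsmul hder => ?_,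
    fun x _ y _ h => HG.ext_of_du_apply fun i φ hφ v => h i φ v hφ⟩
  · obtain ⟨i, φ, v, -, rfl⟩ := hf
    let b := Module.finBasis F (D.V i)
    exact ⟨_, fun k => D.matCoef i φ (b k), fun k => D.matCoef i (b.coord k) v,
      fun k => ⟨HG.matCoef_mem_coordRing _ _ _, HG.matCoef_mem_coordRing _ _ _⟩,
      TannakaSetting.matCoef_mul_eq_sum b φ v⟩
  · let L := AlgHom.ofLinearMap (D.coordFunctional HG α hadd hsmul) hone
      fun a b => hmul a a.2 b b.2
    refine ⟨⟨_, TannakaSetting.endOfFunctional_mem_M L⟩, ?_⟩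
    rintro _ ⟨i, φ, v, -, rfl⟩
    exact (TannakaSetting.apply_endOfFunctional L.toLinearMap i φ v).symm
  · exact Subtype.ext (HG.ext_of_du_apply fun i φ hφ v => h _ ⟨i, φ, v, hφ, rfl⟩)
  · let L := D.coordFunctional HG δ hadd hsmul
    exact ⟨_, TannakaSetting.endOfFunctional_mem_LieM L fun a b => hder a a.2 b b.2,
      fun i φ v _ => (TannakaSetting.apply_endOfFunctional L i φ v).symm⟩

/-- **The classical case: all modules finite dimensional, full duals.**
Suppose every `g`-module contained in `C` is finite dimensional and `C^du` is the category
of full duals.  Then: (a) the multiplication of `M` admits a comorphism, making `F[M]` a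
bialgebra (with counit the evaluation at `1 ∈ M`); (b) evaluation identifies `M` with the set
`Specm F[M]` of `F`-algebra homomorphisms `F[M] → F`; (c) `x ↦ δ_x` identifies `Lie(M)` with
the space `Der_1(F[M])` of point derivations at `1 ∈ M`. -/
theorem stmt_12 (D : TannakaSetting F g) (HG : D.IsGoodSetting)
    (hfd : ∀ i, FiniteDimensional F (D.V i))
    (hfull : ∀ i, D.du i = ⊤) :
    -- (a) the comorphism of the multiplication map exists:
    (∀ f ∈ D.coordRing, ∃ (N : ℕ) (gs hs : Fin N → (↥D.M → F)),
      (∀ k, gs k ∈ D.coordRing ∧ hs k ∈ D.coordRing) ∧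
      ∀ (m m' : ↥D.M) (hmm : m.1 * m'.1 ∈ D.M),
        f ⟨m.1 * m'.1, hmm⟩ = ∑ k, gs k m * hs k m') ∧
    -- (b) `M` identifies with `Specm F[M]`:
    ((∀ α : (↥D.M → F) → F,
        (∀ f ∈ D.coordRing, ∀ h ∈ D.coordRing, α (f + h) = α f + α h) →
        (∀ f ∈ D.coordRing, ∀ c : F, α (c • f) = c * α f) →
        (∀ f ∈ D.coordRing, ∀ h ∈ D.coordRing, α (f * h) = α f * α h) →
        α 1 = 1 →
        ∃ m : ↥D.M, ∀ f ∈ D.coordRing, α f = f m) ∧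
      (∀ m m' : ↥D.M, (∀ f ∈ D.coordRing, f m = f m') → m = m')) ∧
    -- (c) `Lie(M)` identifies with `Der_1(F[M])`:
    ((∀ δ : (↥D.M → F) → F,
        (∀ f ∈ D.coordRing, ∀ h ∈ D.coordRing, δ (f + h) = δ f + δ h) →
        (∀ f ∈ D.coordRing, ∀ c : F, δ (c • f) = c * δ f) →
        (∀ f ∈ D.coordRing, ∀ h ∈ D.coordRing,
          δ (f * h) = δ f * h D.oneM + f D.oneM * δ h) →
        ∃ x ∈ D.LieM, ∀ (i : D.ι) (φ : Module.Dual F (D.V i)) (v : D.V i), φ ∈ D.du i →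
          δ (D.matCoef i φ v) = φ (x i v)) ∧
      (∀ x ∈ D.LieM, ∀ y ∈ D.LieM,
        (∀ (i : D.ι) (φ : Module.Dual F (D.V i)) (v : D.V i), φ ∈ D.du i →
          φ (x i v) = φ (y i v)) → x = y)) :=
  stmt_12_general D HG hfd
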